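/- Let k_q > 0 and let q, q_d : [0, ∞) → S² be differentiable curves such that ⟨q_d(t), q(t)⟩ > −1 for all t ≥ 0 and the velocity error satisfies the feedback relation q̇(t) − 𝒯(q(t), q_d(t))·q̇_d(t) = −k_q e_q(q(t), q_d(t)) for all t ≥ 0. Then (d/dt) Ψ(q(t), q_d(t)) = −k_q ‖e_q(q(t), q_d(t))‖₂², and consequently Ψ(q(t), q_d(t)) ≤ Ψ(q(0), q_d(0)) e^{−(k_q/2) t} for all t ≥ 0. -/

import Mathlib

open scoped RealInnerProductSpace

/-- Cross product on ℝ³ (as `EuclideanSpace ℝ (Fin 3)`). -/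
noncomputable def cross (a b : EuclideanSpace ℝ (Fin 3)) : EuclideanSpace ℝ (Fin 3) :=
  WithLp.toLp 2 ![a 1 * b 2 - a 2 * b 1, a 2 * b 0 - a 0 * b 2, a 0 * b 1 - a 1 * b 0]

/-- Reduced-attitude error function Ψ(q, q_d) = 2 − √2·√(1 + ⟨q_d, q⟩). -/
noncomputable def Psi (q qd : EuclideanSpace ℝ (Fin 3)) : ℝ :=
  2 - Real.sqrt 2 * Real.sqrt (1 + ⟪qd, q⟫)

/-- Reduced-attitude error vector e_q(q, q_d). -/
noncomputable def eVec (q qd : EuclideanSpace ℝ (Fin 3)) : EuclideanSpace ℝ (Fin 3) :=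
  (1 / (Real.sqrt 2 * Real.sqrt (1 + ⟪qd, q⟫))) • cross q (cross q qd)

/-- Transport map 𝒯(q, q_d)·v = (q_d × v) × q. -/
noncomputable def transport (q qd v : EuclideanSpace ℝ (Fin 3)) : EuclideanSpace ℝ (Fin 3) :=
  cross (cross qd v) q


/-! Write `c = ⟪q_d, q⟫`. By the vector triple product, `q × (q × q_d) = c q − q_d`, so
`‖e_q‖² = (1 − c) / 2`, `⟪q_d, e_q⟫ = −√2 √(1 + c) ‖e_q‖²`, and `⟪q_d, 𝒯 v⟫ = −⟪q, v⟫` for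
`v ⊥ q_d`. Pairing the feedback law with `q_d` therefore gives `ċ = k_q √2 √(1 + c) ‖e_q‖²`,
and the chain rule for `Ψ = 2 − √2 √(1 + c)` turns this into `Ψ̇ = −k_q ‖e_q‖²`. Finally
`Ψ ≤ 1 − c = 2 ‖e_q‖²`, so `Ψ̇ ≤ −(k_q / 2) Ψ` and `Ψ(t) e^{(k_q/2) t}` is antitone. -/

lemma cross_eq_toLp_crossProduct (a b : EuclideanSpace ℝ (Fin 3)) :
    cross a b = WithLp.toLp 2 (crossProduct a.ofLp b.ofLp) := by
  rw [cross, cross_apply]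

lemma cross_cross_right_eq (a b c : EuclideanSpace ℝ (Fin 3)) :
    cross a (cross b c) = ⟪a, c⟫ • b - ⟪a, b⟫ • c := by
  simp only [cross_eq_toLp_crossProduct, cross_cross_eq_smul_sub_smul',
    EuclideanSpace.inner_eq_star_dotProduct, star_trivial, dotProduct_comm]
  rfl

lemma cross_cross_left_eq (a b c : EuclideanSpace ℝ (Fin 3)) :
    cross (cross a b) c = ⟪a, c⟫ • b - ⟪b, c⟫ • a := by
  simp only [cross_eq_toLp_crossProduct, cross_cross_eq_smul_sub_smul,
    EuclideanSpace.inner_eq_star_dotProduct, star_trivial, dotProduct_comm]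
  rfl

lemma inner_eq_zero_of_hasDerivAt_of_norm_eq {E : Type*} [NormedAddCommGroup E]
    [InnerProductSpace ℝ E] {γ : ℝ → E} {γ' : E} {t : ℝ} (hγ : HasDerivAt γ γ' t)
    (hnorm : ∀ s, t ≤ s → ‖γ s‖ = ‖γ t‖) : ⟪γ t, γ'⟫ = 0 := by
  have hconst : HasDerivWithinAt (‖γ ·‖ ^ 2) 0 (Set.Ici t) t :=
    (hasDerivWithinAt_const t _ (‖γ t‖ ^ 2)).congr (fun s hs => by rw [hnorm s hs]) rfl
  have hzero := (uniqueDiffWithinAt_Ici t).eq_deriv _ hγ.hasDerivWithinAt.norm_sq hconst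
  linarith

lemma le_mul_exp_of_hasDerivAt_le_neg_mul {f f' : ℝ → ℝ} {k : ℝ}
    (hf : ∀ t, 0 ≤ t → HasDerivAt f (f' t) t) (hf' : ∀ t, 0 ≤ t → f' t ≤ -k * f t) :
    ∀ t, 0 ≤ t → f t ≤ f 0 * Real.exp (-k * t) := by
  have hg : ∀ t, 0 ≤ t → HasDerivAt (fun s => f s * Real.exp (k * s))
      (f' t * Real.exp (k * t) + f t * (Real.exp (k * t) * k)) t := fun t ht =>
    (hf t ht).mul (((hasDerivAt_id t).const_mul k).exp.congr_deriv (by simp))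
  have hanti : AntitoneOn (fun s => f s * Real.exp (k * s)) (Set.Ici 0) := by
    refine antitoneOn_of_hasDerivWithinAt_nonpos (convex_Ici 0)
      (fun t ht => (hg t ht).continuousAt.continuousWithinAt)
      (fun t ht => (hg t (interior_subset ht)).hasDerivWithinAt) fun t ht => ?_
    have hf't := hf' t (interior_subset ht)
    nlinarith [Real.exp_pos (k * t)]
  intro t ht
  have hmono := hanti Set.self_mem_Ici ht ht
  simp only [mul_zero, Real.exp_zero, mul_one] at hmono
  calc f t = f t * Real.exp (k * t) * Real.exp (-k * t) := by
        rw [mul_assoc, ← Real.exp_add, neg_mul, add_neg_cancel, Real.exp_zero, mul_one]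
    _ ≤ f 0 * Real.exp (-k * t) := by gcongr

section ReducedAttitude

variable {q qd : EuclideanSpace ℝ (Fin 3)}

lemma eVec_eq_smul (hq : ‖q‖ = 1) :
    eVec q qd = (1 / (√2 * √(1 + ⟪qd, q⟫))) • (⟪qd, q⟫ • q - qd) := by
  rw [eVec, cross_cross_right_eq, real_inner_self_eq_norm_sq, hq, real_inner_comm, one_pow,
    one_smul]

lemma inner_eVec_left (hq : ‖q‖ = 1) :
    ⟪qd, eVec q qd⟫ = -(√2 * √(1 + ⟪qd, q⟫)) * ‖eVec q qd‖ ^ 2 := by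
  have hqq : ⟪q, q⟫ = 1 := by rw [real_inner_self_eq_norm_sq, hq, one_pow]
  rw [eVec_eq_smul hq]
  generalize hα : 1 / (√2 * √(1 + ⟪qd, q⟫)) = α
  rw [show √2 * √(1 + ⟪qd, q⟫) = α⁻¹ by rw [← hα, one_div, inv_inv],
    ← real_inner_self_eq_norm_sq]
  simp only [inner_sub_left, inner_sub_right, real_inner_smul_left, real_inner_smul_right, hqq,
    real_inner_comm qd q]
  rcases eq_or_ne α 0 with h | h
  · simp [h]
  · field_simp
    ring

lemma norm_eVec_sq (hq : ‖q‖ = 1) (hqd : ‖qd‖ = 1) (hang : -1 < ⟪qd, q⟫) :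
    ‖eVec q qd‖ ^ 2 = (1 - ⟪qd, q⟫) / 2 := by
  have hqq : ⟪q, q⟫ = 1 := by rw [real_inner_self_eq_norm_sq, hq, one_pow]
  have hqdqd : ⟪qd, qd⟫ = 1 := by rw [real_inner_self_eq_norm_sq, hqd, one_pow]
  have hpos : 0 < 1 + ⟪qd, q⟫ := by linarith
  rw [eVec_eq_smul hq, ← real_inner_self_eq_norm_sq]
  simp only [inner_sub_left, inner_sub_right, real_inner_smul_left, real_inner_smul_right, hqq,
    hqdqd, real_inner_comm qd q]
  field_simp
  rw [Real.sq_sqrt zero_le_two, Real.sq_sqrt hpos.le]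
  ring

lemma inner_transport_left {v : EuclideanSpace ℝ (Fin 3)} (hqd : ‖qd‖ = 1) (hv : ⟪qd, v⟫ = 0) :
    ⟪qd, transport q qd v⟫ = -⟪q, v⟫ := by
  rw [transport, cross_cross_left_eq, inner_sub_right, real_inner_smul_right,
    real_inner_smul_right, hv, real_inner_self_eq_norm_sq, hqd, real_inner_comm v]
  ring

lemma Psi_le_one_sub_inner (hq : ‖q‖ = 1) (hqd : ‖qd‖ = 1) : Psi q qd ≤ 1 - ⟪qd, q⟫ := by
  have hle : |⟪qd, q⟫| ≤ 1 := by simpa [hq, hqd] using abs_real_inner_le_norm qd q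
  obtain ⟨hlo, hhi⟩ := abs_le.mp hle
  set s := √(1 + ⟪qd, q⟫)
  have hs : s ^ 2 = 1 + ⟪qd, q⟫ := Real.sq_sqrt (by linarith)
  have hs2 : s ≤ √2 := Real.sqrt_le_sqrt (by linarith)
  -- `1 - ⟪qd, q⟫ - Psi q qd = s * (√2 - s)`
  have hgap := mul_nonneg (Real.sqrt_nonneg (1 + ⟪qd, q⟫)) (sub_nonneg.mpr hs2)
  rw [Psi]
  nlinarith

end ReducedAttitude

lemma hasDerivAt_Psi {q qd : ℝ → EuclideanSpace ℝ (Fin 3)} {q' qd' : EuclideanSpace ℝ (Fin 3)}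
    {t : ℝ} (hq : HasDerivAt q q' t) (hqd : HasDerivAt qd qd' t)
    (hang : -1 < ⟪qd t, q t⟫) :
    HasDerivAt (fun s => Psi (q s) (qd s))
      (-(√2 * ((⟪qd t, q'⟫ + ⟪qd', q t⟫) / (2 * √(1 + ⟪qd t, q t⟫))))) t :=
  ((((hqd.inner ℝ hq).const_add 1).sqrt (by linarith)).const_mul √2).const_sub 2

lemma inner_add_inner_eq_of_feedback {kq : ℝ} {q qd q' qd' : EuclideanSpace ℝ (Fin 3)}
    (hq : ‖q‖ = 1) (hqd : ‖qd‖ = 1) (horth : ⟪qd, qd'⟫ = 0)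
    (hfb : q' - transport q qd qd' = -(kq • eVec q qd)) :
    ⟪qd, q'⟫ + ⟪qd', q⟫ = kq * (√2 * √(1 + ⟪qd, q⟫)) * ‖eVec q qd‖ ^ 2 := by
  rw [sub_eq_iff_eq_add', ← sub_eq_add_neg] at hfb
  rw [hfb, inner_sub_right, inner_transport_left hqd horth, real_inner_smul_right,
    inner_eVec_left hq, real_inner_comm q qd']
  ring

lemma hasDerivAt_Psi_of_feedback {kq t : ℝ} {q qd : ℝ → EuclideanSpace ℝ (Fin 3)}
    {q' qd' : EuclideanSpace ℝ (Fin 3)} (hq : ‖q t‖ = 1) (hqd : ‖qd t‖ = 1)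
    (hq' : HasDerivAt q q' t) (hqd' : HasDerivAt qd qd' t) (hang : -1 < ⟪qd t, q t⟫)
    (horth : ⟪qd t, qd'⟫ = 0)
    (hfb : q' - transport (q t) (qd t) qd' = -(kq • eVec (q t) (qd t))) :
    HasDerivAt (fun s => Psi (q s) (qd s)) (-(kq * ‖eVec (q t) (qd t)‖ ^ 2)) t := by
  refine (hasDerivAt_Psi hq' hqd' hang).congr_deriv ?_
  have hs : √(1 + ⟪qd t, q t⟫) ≠ 0 := (Real.sqrt_pos.mpr (by linarith)).ne'
  rw [inner_add_inner_eq_of_feedback hq hqd horth hfb]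
  field_simp
  rw [Real.sq_sqrt zero_le_two]
  ring

/-- Under the feedback law e_{q̇} = −k_q e_q, the error function satisfies
Ψ̇ = −k_q‖e_q‖² and hence decays exponentially: Ψ(t) ≤ Ψ(0)·e^{−(k_q/2)t}. -/
theorem psi_exponential_decay (kq : ℝ) (hkq : 0 < kq)
    (q qd q' qd' : ℝ → EuclideanSpace ℝ (Fin 3))
    (hq : ∀ t, 0 ≤ t → ‖q t‖ = 1) (hqd : ∀ t, 0 ≤ t → ‖qd t‖ = 1)
    (hq' : ∀ t, 0 ≤ t → HasDerivAt q (q' t) t)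
    (hqd' : ∀ t, 0 ≤ t → HasDerivAt qd (qd' t) t)
    (hang : ∀ t, 0 ≤ t → ⟪qd t, q t⟫ > -1)
    (hfb : ∀ t, 0 ≤ t →
      q' t - transport (q t) (qd t) (qd' t) = -(kq • eVec (q t) (qd t))) :
    (∀ t, 0 ≤ t → HasDerivAt (fun s => Psi (q s) (qd s))
        (-(kq * ‖eVec (q t) (qd t)‖ ^ 2)) t) ∧
    (∀ t, 0 ≤ t → Psi (q t) (qd t) ≤ Psi (q 0) (qd 0) * Real.exp (-(kq / 2) * t)) := by
  have horth : ∀ t, 0 ≤ t → ⟪qd t, qd' t⟫ = 0 := fun t ht =>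
    inner_eq_zero_of_hasDerivAt_of_norm_eq (hqd' t ht) fun s hs => by
      rw [hqd s (ht.trans hs), hqd t ht]
  have hderiv : ∀ t, 0 ≤ t → HasDerivAt (fun s => Psi (q s) (qd s))
      (-(kq * ‖eVec (q t) (qd t)‖ ^ 2)) t := fun t ht =>
    hasDerivAt_Psi_of_feedback (hq t ht) (hqd t ht) (hq' t ht) (hqd' t ht) (hang t ht)
      (horth t ht) (hfb t ht)
  refine ⟨hderiv, le_mul_exp_of_hasDerivAt_le_neg_mul hderiv fun t ht => ?_⟩
  have hPsi := Psi_le_one_sub_inner (hq t ht) (hqd t ht)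
  rw [norm_eVec_sq (hq t ht) (hqd t ht) (hang t ht)]
  nlinarith
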